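/- Let p ∈ [1,∞] be fixed and let 𝒞 be a compact set of n×n stochastic matrices each of which satisfies ⟨M⟩_p < 1 for the induced consensus seminorm, and set λ = max_{M ∈ 𝒞} ⟨M⟩_p. Then for every infinite sequence M₁, M₂, … of matrices from 𝒞, the product M_i M_{i−1} ⋯ M₁ converges as i → ∞ to a rank-one matrix of the form 𝟏c for some row vector c, and convergence occurs as fast as λ^i converges to zero: there is a constant K such that ‖M_i M_{i−1} ⋯ M₁ − 𝟏c‖ ≤ K·λ^i for all i ≥ 1. -/

import Mathlib

open Matrix Finset
open scoped ENNReal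

noncomputable def matPNorm (p : ℝ≥0∞) [Fact (1 ≤ p)] {n m : ℕ}
    (M : Matrix (Fin n) (Fin m) ℝ) : ℝ :=
  ‖LinearMap.toContinuousLinearMap
    (Matrix.toLin (PiLp.basisFun p ℝ (Fin m)) (PiLp.basisFun p ℝ (Fin n)) M)‖

noncomputable def metricSN (p : ℝ≥0∞) [Fact (1 ≤ p)] {n m : ℕ}
    (M : Matrix (Fin n) (Fin m) ℝ) : ℝ :=
  ⨅ c : Fin m → ℝ, matPNorm p (M - Matrix.of fun _ j => c j)

noncomputable def vecSN (p : ℝ≥0∞) [Fact (1 ≤ p)] {m : ℕ} (x : Fin m → ℝ) : ℝ :=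
  ⨅ c : ℝ, ‖(WithLp.equiv p (Fin m → ℝ)).symm (x - fun _ => c)‖

noncomputable def inducedSN (p : ℝ≥0∞) [Fact (1 ≤ p)] {n m : ℕ}
    (M : Matrix (Fin n) (Fin m) ℝ) : ℝ :=
  sSup {r | ∃ x : Fin m → ℝ, vecSN p x = 1 ∧ r = vecSN p (M.mulVec x)}

noncomputable def coeErg {n : ℕ} (M : Matrix (Fin n) (Fin n) ℝ) : ℝ :=
  (1 / 2) * ⨆ i : Fin n, ⨆ j : Fin n, ∑ k, |M i k - M j k|

def IsStochastic {n : ℕ} (S : Matrix (Fin n) (Fin n) ℝ) : Prop :=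
  (∀ i j, 0 ≤ S i j) ∧ ∀ i, ∑ j, S i j = 1

def IsScrambling {n : ℕ} (S : Matrix (Fin n) (Fin n) ℝ) : Prop :=
  IsStochastic S ∧ ∀ i j, ∃ k, 0 < S i k ∧ 0 < S j k

def EqRowSum (n m : ℕ) : Submodule ℝ (Matrix (Fin n) (Fin m) ℝ) where
  carrier := {M | ∀ i i', ∑ j, M i j = ∑ j, M i' j}
  add_mem' := by
    intro A B hA hB i i'
    simp only [Matrix.add_apply, Finset.sum_add_distrib, hA i i', hB i i']
  zero_mem' := by intro i i'; simp
  smul_mem' := by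
    intro c A hA i i'
    simp only [Matrix.smul_apply, smul_eq_mul, ← Finset.mul_sum, hA i i']

noncomputable def prodSeq {n : ℕ} (M : ℕ → Matrix (Fin n) (Fin n) ℝ) :
    ℕ → Matrix (Fin n) (Fin n) ℝ
  | 0 => 1
  | (i + 1) => M i * prodSeq M i

/-! The consensus seminorm contracts along the product: `|M x|_p ≤ ⟨M⟩_p |x|_p`, and `⟨·⟩_p` is
1-Lipschitz for the operator norm on matrices with a common row sum, so it attains on the compact
set `𝒞` a maximum `λ < 1`. Hence every column of `P_i = M_i ⋯ M₁` has spread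
`max − min ≤ 2 |P_i e_j|_p ≤ 2 λ^i`. Multiplying by a stochastic matrix forms convex combinations
of entries, so the column maxima decrease and the column minima increase; they squeeze a common
limit `c_j`, which every entry of column `j` approaches at rate `2 λ^i`. -/

open WithLp (toLp)

section MatrixNorm

variable (p : ℝ≥0∞) [Fact (1 ≤ p)] {n m : ℕ}

noncomputable def toLpCLM :
    Matrix (Fin n) (Fin m) ℝ ≃ₗ[ℝ] (WithLp p (Fin m → ℝ) →L[ℝ] WithLp p (Fin n → ℝ)) :=
  (Matrix.toLpLin p p).trans LinearMap.toContinuousLinearMap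

lemma matPNorm_eq_norm_toLpCLM (M : Matrix (Fin n) (Fin m) ℝ) :
    matPNorm p M = ‖toLpCLM p M‖ := rfl

lemma matPNorm_nonneg (M : Matrix (Fin n) (Fin m) ℝ) : 0 ≤ matPNorm p M :=
  norm_nonneg _

lemma matPNorm_sub_comm (M M' : Matrix (Fin n) (Fin m) ℝ) :
    matPNorm p (M - M') = matPNorm p (M' - M) := by
  simp only [matPNorm_eq_norm_toLpCLM, map_sub, norm_sub_rev]

lemma continuous_matPNorm : Continuous (matPNorm p : Matrix (Fin n) (Fin m) ℝ → ℝ) :=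
  continuous_norm.comp (LinearMap.continuous_of_finiteDimensional (toLpCLM p).toLinearMap)

lemma norm_toLp_mulVec_le (M : Matrix (Fin n) (Fin m) ℝ) (v : Fin m → ℝ) :
    ‖toLp p (M *ᵥ v)‖ ≤ matPNorm p M * ‖toLp p v‖ :=
  (toLpCLM p M).le_opNorm (toLp p v)

lemma matPNorm_le_of_abs_apply_le {A : Matrix (Fin n) (Fin m) ℝ} {r : ℝ}
    (hA : ∀ k j, |A k j| ≤ r) :
    matPNorm p A ≤ r * ∑ k : Fin n, ∑ j : Fin m, matPNorm p (Matrix.single k j (1 : ℝ)) := by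
  rw [Finset.mul_sum, matPNorm_eq_norm_toLpCLM, matrix_eq_sum_single A, map_sum]
  refine (norm_sum_le _ _).trans (Finset.sum_le_sum fun k _ => ?_)
  rw [Finset.mul_sum, map_sum]
  refine (norm_sum_le _ _).trans (Finset.sum_le_sum fun j _ => ?_)
  rw [← mul_one (A k j), ← smul_eq_mul, ← Matrix.smul_single, map_smul, norm_smul,
    Real.norm_eq_abs]
  exact mul_le_mul_of_nonneg_right (hA k j) (matPNorm_nonneg p _)

end MatrixNorm

lemma mulVec_const_of_sum_eq {ι κ : Type*} [Fintype κ] {r : ℝ} (A : Matrix ι κ ℝ)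
    (hA : ∀ i, ∑ j, A i j = r) (c : ℝ) : (A *ᵥ fun _ => c) = fun _ => c * r := by
  ext i
  rw [mulVec, dotProduct, ← Finset.sum_mul, hA i, mul_comm]

section VecSN

variable (p : ℝ≥0∞) [Fact (1 ≤ p)] {n m : ℕ}

lemma vecSN_eq_iInf (x : Fin m → ℝ) : vecSN p x = ⨅ c : ℝ, ‖toLp p (x - fun _ => c)‖ := rfl

lemma vecSN_le (x : Fin m → ℝ) (c : ℝ) : vecSN p x ≤ ‖toLp p (x - fun _ => c)‖ :=
  ciInf_le ⟨0, by rintro _ ⟨c, rfl⟩; exact norm_nonneg _⟩ c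

lemma vecSN_nonneg (x : Fin m → ℝ) : 0 ≤ vecSN p x :=
  Real.iInf_nonneg fun _ => norm_nonneg _

lemma vecSN_le_norm (x : Fin m → ℝ) : vecSN p x ≤ ‖toLp p x‖ :=
  (vecSN_le p x 0).trans_eq (by congr 2; exact sub_zero x)

lemma vecSN_single_le_one (j : Fin m) : vecSN p (Pi.single j 1) ≤ 1 :=
  (vecSN_le_norm p _).trans_eq (by rw [PiLp.toLp_single, PiLp.norm_single, norm_one])

lemma vecSN_smul {t : ℝ} (ht : 0 < t) (x : Fin m → ℝ) : vecSN p (t • x) = t * vecSN p x := by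
  rw [vecSN_eq_iInf, vecSN_eq_iInf, Real.mul_iInf_of_nonneg ht.le,
    ← (mul_left_surjective₀ ht.ne').iInf_comp]
  congr 1 with c
  rw [← norm_smul_of_nonneg ht.le, ← WithLp.toLp_smul, smul_sub]
  rfl

lemma vecSN_add_le (x y : Fin m → ℝ) : vecSN p (x + y) ≤ vecSN p x + vecSN p y := by
  rw [vecSN_eq_iInf p x, vecSN_eq_iInf p y]
  refine le_ciInf_add_ciInf fun c c' => (vecSN_le p _ (c + c')).trans ?_
  have hsplit : (x + y - fun _ => c + c') = (x - fun _ => c) + (y - fun _ => c') :=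
    add_sub_add_comm x y _ _
  rw [hsplit, WithLp.toLp_add]
  exact norm_add_le _ _

lemma vecSN_mulVec_le {r : ℝ} (A : Matrix (Fin n) (Fin m) ℝ) (hA : ∀ i, ∑ j, A i j = r)
    (x : Fin m → ℝ) : vecSN p (A *ᵥ x) ≤ matPNorm p A * vecSN p x := by
  rw [vecSN_eq_iInf p x, Real.mul_iInf_of_nonneg (matPNorm_nonneg p A)]
  refine le_ciInf fun c => (vecSN_le p _ (c * r)).trans ?_
  rw [← mulVec_const_of_sum_eq A hA, ← Matrix.mulVec_sub]
  exact norm_toLp_mulVec_le p A _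

lemma sub_le_two_mul_vecSN (x : Fin m → ℝ) (k k' : Fin m) : x k - x k' ≤ 2 * vecSN p x := by
  rw [vecSN_eq_iInf, Real.mul_iInf_of_nonneg zero_le_two]
  refine le_ciInf fun c => ?_
  have hk := PiLp.norm_apply_le (toLp p (x - fun _ => c)) k
  have hk' := PiLp.norm_apply_le (toLp p (x - fun _ => c)) k'
  simp only [Pi.sub_apply, Real.norm_eq_abs] at hk hk'
  linarith [le_abs_self (x k - c), neg_abs_le (x k' - c)]

end VecSN

section InducedSN

variable (p : ℝ≥0∞) [Fact (1 ≤ p)] {n m : ℕ}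

lemma inducedSN_nonneg (M : Matrix (Fin n) (Fin m) ℝ) : 0 ≤ inducedSN p M :=
  Real.sSup_nonneg fun _ ⟨_, _, hr⟩ => hr ▸ vecSN_nonneg p _

lemma bddAbove_inducedSN_set {r : ℝ} (M : Matrix (Fin n) (Fin m) ℝ) (hM : ∀ i, ∑ j, M i j = r) :
    BddAbove {s | ∃ x : Fin m → ℝ, vecSN p x = 1 ∧ s = vecSN p (M *ᵥ x)} := by
  refine ⟨matPNorm p M, ?_⟩
  rintro _ ⟨x, hx, rfl⟩
  simpa [hx] using vecSN_mulVec_le p M hM x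

lemma vecSN_mulVec_le_inducedSN_mul {r : ℝ} (M : Matrix (Fin n) (Fin m) ℝ)
    (hM : ∀ i, ∑ j, M i j = r) (x : Fin m → ℝ) :
    vecSN p (M *ᵥ x) ≤ inducedSN p M * vecSN p x := by
  obtain hx | hx := (vecSN_nonneg p x).eq_or_lt
  · simpa [← hx] using vecSN_mulVec_le p M hM x
  set s := vecSN p x
  have hunit : vecSN p (s⁻¹ • x) = 1 := by
    rw [vecSN_smul p (inv_pos.2 hx), inv_mul_cancel₀ hx.ne']
  have hle : vecSN p (M *ᵥ (s⁻¹ • x)) ≤ inducedSN p M :=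
    le_csSup (bddAbove_inducedSN_set p M hM) ⟨_, hunit, rfl⟩
  calc vecSN p (M *ᵥ x) = s * vecSN p (M *ᵥ (s⁻¹ • x)) := by
        rw [mulVec_smul, vecSN_smul p (inv_pos.2 hx), mul_inv_cancel_left₀ hx.ne']
    _ ≤ s * inducedSN p M := by gcongr
    _ = inducedSN p M * s := mul_comm _ _

lemma inducedSN_le_add_matPNorm_sub {r : ℝ} (M M' : Matrix (Fin n) (Fin m) ℝ)
    (hM : ∀ i, ∑ j, M i j = r) (hM' : ∀ i, ∑ j, M' i j = r) :
    inducedSN p M ≤ inducedSN p M' + matPNorm p (M - M') := by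
  refine Real.sSup_le ?_ (add_nonneg (inducedSN_nonneg p M') (matPNorm_nonneg p _))
  rintro _ ⟨x, hx, rfl⟩
  have hdiff : ∀ i, ∑ j, (M - M') i j = 0 := fun i => by
    simp [Finset.sum_sub_distrib, hM i, hM' i]
  calc vecSN p (M *ᵥ x) = vecSN p (M' *ᵥ x + (M - M') *ᵥ x) := by
        rw [sub_mulVec, add_sub_cancel]
    _ ≤ vecSN p (M' *ᵥ x) + vecSN p ((M - M') *ᵥ x) := vecSN_add_le p _ _
    _ ≤ inducedSN p M' * vecSN p x + matPNorm p (M - M') * vecSN p x :=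
        add_le_add (vecSN_mulVec_le_inducedSN_mul p M' hM' x) (vecSN_mulVec_le p _ hdiff x)
    _ = inducedSN p M' + matPNorm p (M - M') := by rw [hx, mul_one, mul_one]

lemma continuousOn_inducedSN (r : ℝ) :
    ContinuousOn (inducedSN p) {M : Matrix (Fin n) (Fin m) ℝ | ∀ i, ∑ j, M i j = r} := by
  intro M₀ hM₀
  have hnorm : Filter.Tendsto (fun M => matPNorm p (M - M₀)) (nhds M₀) (nhds 0) := by
    simpa [Function.comp_def, matPNorm_eq_norm_toLpCLM] using
      ((continuous_matPNorm p).comp (continuous_sub_right M₀)).tendsto M₀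
  rw [ContinuousWithinAt, tendsto_iff_dist_tendsto_zero]
  refine squeeze_zero' (Filter.Eventually.of_forall fun _ => dist_nonneg) ?_
    (hnorm.mono_left nhdsWithin_le_nhds)
  filter_upwards [self_mem_nhdsWithin] with M hM
  rw [Real.dist_eq, abs_sub_le_iff]
  constructor <;> linarith [inducedSN_le_add_matPNorm_sub p M M₀ hM hM₀,
    inducedSN_le_add_matPNorm_sub p M₀ M hM₀ hM, matPNorm_sub_comm p M M₀]

end InducedSN

section Stochastic

variable {ι : Type*} [Fintype ι] [DecidableEq ι] {Q : Matrix ι ι ℝ}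

lemma mulVec_apply_le_of_mem_rowStochastic (hQ : Q ∈ rowStochastic ℝ ι) {v : ι → ℝ} {a : ℝ}
    (hv : ∀ l, v l ≤ a) (k : ι) : (Q *ᵥ v) k ≤ a :=
  calc (Q *ᵥ v) k = ∑ l, Q k l * v l := rfl
    _ ≤ ∑ l, Q k l * a :=
        Finset.sum_le_sum fun l _ => mul_le_mul_of_nonneg_left (hv l) (nonneg_of_mem_rowStochastic hQ)
    _ = a := by rw [← Finset.sum_mul, sum_row_of_mem_rowStochastic hQ, one_mul]

lemma le_mulVec_apply_of_mem_rowStochastic (hQ : Q ∈ rowStochastic ℝ ι) {v : ι → ℝ} {a : ℝ}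
    (hv : ∀ l, a ≤ v l) (k : ι) : a ≤ (Q *ᵥ v) k :=
  calc a = ∑ l, Q k l * a := by rw [← Finset.sum_mul, sum_row_of_mem_rowStochastic hQ, one_mul]
    _ ≤ ∑ l, Q k l * v l :=
        Finset.sum_le_sum fun l _ => mul_le_mul_of_nonneg_left (hv l) (nonneg_of_mem_rowStochastic hQ)
    _ = (Q *ᵥ v) k := rfl

lemma exists_forall_abs_sub_le_of_rowStochastic_iterates {Q : ℕ → Matrix ι ι ℝ}
    (hQ : ∀ i, Q i ∈ rowStochastic ℝ ι) {x : ℕ → ι → ℝ} (hx : ∀ i, x (i + 1) = Q i *ᵥ x i)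
    {B : ℕ → ℝ} (hB : ∀ i k k', x i k - x i k' ≤ B i) :
    ∃ c : ℝ, ∀ i k, |x i k - c| ≤ B i := by
  rcases isEmpty_or_nonempty ι with hι | hι
  · exact ⟨0, fun _ k => isEmptyElim k⟩
  set a : ℕ → ℝ := fun i => univ.sup' univ_nonempty (x i)
  set b : ℕ → ℝ := fun i => univ.inf' univ_nonempty (x i)
  have le_a : ∀ i k, x i k ≤ a i := fun i k => le_sup' (x i) (mem_univ k)
  have b_le : ∀ i k, b i ≤ x i k := fun i k => inf'_le (x i) (mem_univ k)
  have a_anti : Antitone a := antitone_nat_of_succ_le fun i => sup'_le _ _ fun k _ => by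
    rw [hx]; exact mulVec_apply_le_of_mem_rowStochastic (hQ i) (le_a i) k
  have b_mono : Monotone b := monotone_nat_of_le_succ fun i => le_inf' _ _ fun k _ => by
    rw [hx]; exact le_mulVec_apply_of_mem_rowStochastic (hQ i) (b_le i) k
  have b_le_a : ∀ i i', b i ≤ a i' := fun i i' =>
    (b_mono (le_max_left i i')).trans <| (b_le _ hι.some).trans <|
      (le_a _ hι.some).trans (a_anti (le_max_right i i'))
  refine ⟨⨅ i, a i, fun i k => ?_⟩
  have hc_le : ⨅ i, a i ≤ a i := ciInf_le ⟨b 0, Set.forall_mem_range.2 (b_le_a 0)⟩ i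
  have le_hc : b i ≤ ⨅ i, a i := le_ciInf (b_le_a i)
  obtain ⟨k₁, -, hk₁⟩ := exists_mem_eq_sup' univ_nonempty (x i)
  obtain ⟨k₂, -, hk₂⟩ := exists_mem_eq_inf' univ_nonempty (x i)
  have hosc : a i - b i ≤ B i := by simpa only [a, b, hk₁, hk₂] using hB i k₁ k₂
  rw [abs_le]
  constructor <;> linarith [le_a i k, b_le i k]

end Stochastic

section Products

variable (p : ℝ≥0∞) [Fact (1 ≤ p)] {n : ℕ} {Mseq : ℕ → Matrix (Fin n) (Fin n) ℝ} {lam : ℝ}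

lemma vecSN_prodSeq_mulVec_le (hstoch : ∀ i, Mseq i ∈ rowStochastic ℝ (Fin n))
    (hle : ∀ i, inducedSN p (Mseq i) ≤ lam) (x : Fin n → ℝ) (i : ℕ) :
    vecSN p (prodSeq Mseq i *ᵥ x) ≤ lam ^ i * vecSN p x := by
  induction i with
  | zero => simp [prodSeq]
  | succ i ih =>
    calc vecSN p (prodSeq Mseq (i + 1) *ᵥ x) = vecSN p (Mseq i *ᵥ (prodSeq Mseq i *ᵥ x)) := by
          rw [prodSeq, mulVec_mulVec]
      _ ≤ inducedSN p (Mseq i) * vecSN p (prodSeq Mseq i *ᵥ x) :=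
          vecSN_mulVec_le_inducedSN_mul p _ (sum_row_of_mem_rowStochastic (hstoch i)) _
      _ ≤ lam * (lam ^ i * vecSN p x) :=
          mul_le_mul (hle i) ih (vecSN_nonneg p _) ((inducedSN_nonneg p _).trans (hle i))
      _ = lam ^ (i + 1) * vecSN p x := by ring

lemma exists_matPNorm_prodSeq_sub_le (hstoch : ∀ i, Mseq i ∈ rowStochastic ℝ (Fin n))
    (hle : ∀ i, inducedSN p (Mseq i) ≤ lam) :
    ∃ c : Fin n → ℝ, ∃ K : ℝ, ∀ i,
      matPNorm p (prodSeq Mseq i - Matrix.of fun _ j => c j) ≤ K * lam ^ i := by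
  have hlam : 0 ≤ lam := (inducedSN_nonneg p _).trans (hle 0)
  have hcol : ∀ j, ∃ cj : ℝ, ∀ i k, |prodSeq Mseq i k j - cj| ≤ 2 * lam ^ i := by
    intro j
    have hosc : ∀ i k k', prodSeq Mseq i k j - prodSeq Mseq i k' j ≤ 2 * lam ^ i := by
      intro i k k'
      calc prodSeq Mseq i k j - prodSeq Mseq i k' j
          ≤ 2 * vecSN p (prodSeq Mseq i *ᵥ Pi.single j 1) := by
            simpa [mulVec_single_one] using
              sub_le_two_mul_vecSN p (prodSeq Mseq i *ᵥ Pi.single j 1) k k'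
        _ ≤ 2 * (lam ^ i * vecSN p (Pi.single j 1)) := by
            gcongr; exact vecSN_prodSeq_mulVec_le p hstoch hle _ i
        _ ≤ 2 * lam ^ i := by
            gcongr; exact mul_le_of_le_one_right (pow_nonneg hlam i) (vecSN_single_le_one p j)
    refine exists_forall_abs_sub_le_of_rowStochastic_iterates hstoch
      (x := fun i k => prodSeq Mseq i k j) (fun i => ?_) hosc
    ext k
    simp [prodSeq, mul_apply, mulVec, dotProduct]
  choose c hc using hcol
  refine ⟨c, 2 * ∑ k : Fin n, ∑ j : Fin n, matPNorm p (Matrix.single k j (1 : ℝ)), fun i => ?_⟩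
  rw [mul_right_comm]
  exact matPNorm_le_of_abs_apply_le p fun k j => hc j i k

end Products

/-- Let p ∈ [1,∞] and let 𝒞 be a compact set of n×n stochastic
matrices with ⟨M⟩_p < 1 for each M ∈ 𝒞, and λ = max_{M ∈ 𝒞} ⟨M⟩_p. For every
infinite sequence of matrices from 𝒞, the product M_i⋯M₁ converges to a rank-one
matrix 𝟏c as fast as λ^i → 0: there is K with ‖M_i⋯M₁ − 𝟏c‖ ≤ K·λ^i for all i ≥ 1. -/
theorem inducedSN_contraction_convergence (n : ℕ) (p : ℝ≥0∞) [Fact (1 ≤ p)]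
    (C : Set (Matrix (Fin n) (Fin n) ℝ)) (hC : IsCompact C)
    (hstoch : ∀ M ∈ C, IsStochastic M)
    (hcontr : ∀ M ∈ C, inducedSN p M < 1) :
    ∀ Mseq : ℕ → Matrix (Fin n) (Fin n) ℝ, (∀ i, Mseq i ∈ C) →
      ∃ c : Fin n → ℝ, ∃ K : ℝ,
        Filter.Tendsto
          (fun i => matPNorm p (prodSeq Mseq i - Matrix.of fun _ j => c j))
          Filter.atTop (nhds 0) ∧
        ∀ i : ℕ, 1 ≤ i →
          matPNorm p (prodSeq Mseq i - Matrix.of fun _ j => c j)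
            ≤ K * (sSup ((fun M => inducedSN p M) '' C)) ^ i := by
  intro Mseq hMseq
  have hcont : ContinuousOn (fun M => inducedSN p M) C :=
    (continuousOn_inducedSN p 1).mono fun M hM => (hstoch M hM).2
  have hle : ∀ i, inducedSN p (Mseq i) ≤ sSup ((fun M => inducedSN p M) '' C) := fun i =>
    le_csSup (hC.image_of_continuousOn hcont).bddAbove (Set.mem_image_of_mem _ (hMseq i))
  have hlt : sSup ((fun M => inducedSN p M) '' C) < 1 :=
    (hC.sSup_lt_iff_of_continuous ⟨_, hMseq 0⟩ hcont 1).2 hcontr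
  obtain ⟨c, K, hK⟩ := exists_matPNorm_prodSeq_sub_le p
    (fun i => mem_rowStochastic_iff_sum.2 (hstoch _ (hMseq i))) hle
  refine ⟨c, K, squeeze_zero (fun i => matPNorm_nonneg p _) hK ?_, fun i _ => hK i⟩
  simpa using (tendsto_pow_atTop_nhds_zero_of_lt_one
    ((inducedSN_nonneg p _).trans (hle 0)) hlt).const_mul K
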